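/- Let α ≥ 1/2 and β ≥ 1/2, let a⁰ = {a_j⁰}_{j≥0} ∈ l², b⁰ = {b_j⁰}_{j≥0} ∈ l², and let the forcing f satisfy ∑_{j≥0} λ_j^{-2α} ∫₀ᵀ f_j²(t) dt < ∞. Then any two Leray-Hopf solutions on [0,T] of the dyadic model of the generalized MHD system with initial data (a⁰, b⁰) and forcing f coincide on [0,T]. -/

import Mathlib

open Real MeasureTheory Set
open scoped ENNReal NNReal

noncomputable section

/-- `lamPow l j s = λ_j^s` where `λ_j = l^j`. -/
def lamPow (l : ℝ) (j : ℕ) (s : ℝ) : ℝ := (l ^ j : ℝ) ^ s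

/-- Value of a shell-indexed quantity at the previous index,
with the convention that the `(-1)`-st entry vanishes. -/
def dprev (x : ℕ → ℝ → ℝ) : ℕ → ℝ → ℝ
  | 0 => fun _ => 0
  | j + 1 => x j

/-- `(a, b)` is a weak solution on `[0,T]` of the dyadic model of the
generalized MHD system (unit viscosity and resistivity) with forcing `f`:
`a_j' + λ_j^{2α} a_j + λ_j a_j a_{j+1} + λ_j b_j b_{j+1} − λ_{j-1} a_{j-1}² − λ_{j-1} b_{j-1}² = f_j`,
`b_j' + λ_j^{2β} b_j − λ_j a_j b_{j+1} + λ_j b_j a_{j+1} = 0`,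
with `a_j, b_j ∈ C¹([0,T])` and `a(t), b(t) ∈ l²` for each `t`. -/
def IsWeakSolutionGMHD (l α β T : ℝ) (f a b : ℕ → ℝ → ℝ) : Prop :=
  (∀ j, ContDiffOn ℝ 1 (a j) (Icc 0 T)) ∧
  (∀ j, ContDiffOn ℝ 1 (b j) (Icc 0 T)) ∧
  (∀ t ∈ Icc 0 T, Summable fun j => (a j t) ^ 2) ∧
  (∀ t ∈ Icc 0 T, Summable fun j => (b j t) ^ 2) ∧
  (∀ j, ∀ t ∈ Icc 0 T,
    derivWithin (a j) (Icc 0 T) t + lamPow l j (2 * α) * a j t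
      + lamPow l j 1 * a j t * a (j + 1) t
      + lamPow l j 1 * b j t * b (j + 1) t
      - dprev (fun i t => lamPow l i 1 * (a i t) ^ 2) j t
      - dprev (fun i t => lamPow l i 1 * (b i t) ^ 2) j t = f j t) ∧
  (∀ j, ∀ t ∈ Icc 0 T,
    derivWithin (b j) (Icc 0 T) t + lamPow l j (2 * β) * b j t
      - lamPow l j 1 * a j t * b (j + 1) t
      + lamPow l j 1 * b j t * a (j + 1) t = 0)

/-- `(a, b)` is a Leray-Hopf solution on `[0,T]` of the dyadic model of the
generalized MHD system: a weak solution with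
`a ∈ L^∞(0,T; l²) ∩ L²(0,T; H^α)`, `b ∈ L^∞(0,T; l²) ∩ L²(0,T; H^β)`,
satisfying the energy inequality. -/
def IsLerayHopfGMHD (l α β T : ℝ) (f a b : ℕ → ℝ → ℝ) : Prop :=
  IsWeakSolutionGMHD l α β T f a b ∧
  (∃ M : ℝ, ∀ t ∈ Icc 0 T, (∑' j, (a j t) ^ 2) + (∑' j, (b j t) ^ 2) ≤ M) ∧
  Summable (fun j => ∫ t in (0:ℝ)..T, lamPow l j (2 * α) * (a j t) ^ 2) ∧
  Summable (fun j => ∫ t in (0:ℝ)..T, lamPow l j (2 * β) * (b j t) ^ 2) ∧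
  (∀ t ∈ Icc 0 T,
    (∑' j, ((a j t) ^ 2 + (b j t) ^ 2))
      + 2 * ∑' j, ∫ τ in (0:ℝ)..t,
          (lamPow l j (2 * α) * (a j τ) ^ 2 + lamPow l j (2 * β) * (b j τ) ^ 2)
    ≤ (∑' j, ((a j 0) ^ 2 + (b j 0) ^ 2))
      + 2 * ∑' j, ∫ τ in (0:ℝ)..t, f j τ * a j τ)

/-! ### Auxiliary lemmas -/

lemma lamPow_pos {l : ℝ} (hl : 1 < l) (j : ℕ) (s : ℝ) : 0 < lamPow l j s :=
  Real.rpow_pos_of_pos (pow_pos (lt_trans one_pos hl) j) s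

lemma one_le_lam_base {l : ℝ} (hl : 1 < l) (j : ℕ) : (1:ℝ) ≤ l ^ j :=
  one_le_pow₀ hl.le

lemma lamPow_exp_mono {l : ℝ} (hl : 1 < l) (j : ℕ) {s s' : ℝ} (h : s ≤ s') :
    lamPow l j s ≤ lamPow l j s' :=
  Real.rpow_le_rpow_of_exponent_le (one_le_lam_base hl j) h

lemma lamPow_base_mono {l : ℝ} (hl : 1 < l) {j k : ℕ} (hjk : j ≤ k) {s : ℝ} (hs : 0 ≤ s) :
    lamPow l j s ≤ lamPow l k s :=
  Real.rpow_le_rpow (pow_nonneg (by linarith) j) (pow_le_pow_right₀ (by linarith) hjk) hs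

/-- elementary weighted AM-GM estimate used for each nonlinear term -/
lemma gmhd_tb (c x m y A G E : ℝ) (hc : 0 ≤ c) (hA : c ≤ A) (hG : c * m ^ 2 ≤ G)
    (hy : y ^ 2 ≤ E) :
    2 * (c * x * (m * y)) ≤ 1 / 4 * (A * x ^ 2) + 4 * (G * E) := by
  have hG0 : 0 ≤ G := le_trans (by positivity) hG
  nlinarith [mul_nonneg hc (sq_nonneg (x / 2 - 2 * m * y)),
    mul_nonneg (sub_nonneg.2 hA) (sq_nonneg x),
    mul_nonneg (sub_nonneg.2 hG) (sq_nonneg y),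
    mul_nonneg hG0 (sub_nonneg.2 hy)]

set_option maxHeartbeats 1000000 in
/-- the per-mode estimate for the difference of two solutions -/
lemma gmhd_modeBound (A B p q gm gj gj1 E aj uj bj vj aj1 uj1 bj1 vj1 am um bm vm : ℝ)
    (hp : 0 ≤ p) (hq : 0 ≤ q) (hpA : p ≤ A) (hqA : q ≤ A) (hqB : q ≤ B)
    (h1 : q * aj1 ^ 2 ≤ gj1) (h2 : q * bj1 ^ 2 ≤ gj1)
    (h3 : q * uj ^ 2 ≤ gj) (h4 : q * vj ^ 2 ≤ gj)
    (h5 : p * (am + um) ^ 2 ≤ 2 * gm) (h6 : p * (bm + vm) ^ 2 ≤ 2 * gm)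
    (e1 : (aj - uj) ^ 2 ≤ E) (e2 : (bj - vj) ^ 2 ≤ E)
    (e3 : (aj1 - uj1) ^ 2 ≤ E) (e4 : (bj1 - vj1) ^ 2 ≤ E)
    (e5 : (am - um) ^ 2 ≤ E) (e6 : (bm - vm) ^ 2 ≤ E) :
    2 * (aj - uj) *
        (-(A * (aj - uj)) - q * (aj * aj1 - uj * uj1) - q * (bj * bj1 - vj * vj1)
          + p * (am ^ 2 - um ^ 2) + p * (bm ^ 2 - vm ^ 2))
      + 2 * (bj - vj) *
        (-(B * (bj - vj)) + q * (aj * bj1 - uj * vj1) - q * (bj * aj1 - vj * uj1))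
      ≤ 32 * (gm + gj + gj1) * E := by
  have hE0 : 0 ≤ E := le_trans (sq_nonneg _) e1
  have hgj1 : 0 ≤ gj1 := le_trans (by positivity) h1
  have hgj : 0 ≤ gj := le_trans (by positivity) h3
  have hgm : 0 ≤ gm := by nlinarith [mul_nonneg hp (sq_nonneg (am + um))]
  have hA0 : 0 ≤ A := hq.trans hqA
  have hB0 : 0 ≤ B := hq.trans hqB
  have T1 := gmhd_tb q (-(aj - uj)) aj1 (aj - uj) A gj1 E hq hqA h1 e1
  have T2 := gmhd_tb q (-(aj - uj)) uj (aj1 - uj1) A gj E hq hqA h3 e3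
  have T3 := gmhd_tb q (-(aj - uj)) bj1 (bj - vj) A gj1 E hq hqA h2 e2
  have T4 := gmhd_tb q (-(aj - uj)) vj (bj1 - vj1) A gj E hq hqA h4 e4
  have T5 := gmhd_tb p (aj - uj) (am + um) (am - um) A (2 * gm) E hp hpA h5 e5
  have T6 := gmhd_tb p (aj - uj) (bm + vm) (bm - vm) A (2 * gm) E hp hpA h6 e6
  have T7 := gmhd_tb q (bj - vj) bj1 (aj - uj) B gj1 E hq hqB h2 e1
  have T8 := gmhd_tb q (bj - vj) uj (bj1 - vj1) B gj E hq hqB h3 e4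
  have T9 := gmhd_tb q (-(bj - vj)) aj1 (bj - vj) B gj1 E hq hqB h1 e2
  have T10 := gmhd_tb q (-(bj - vj)) vj (aj1 - uj1) B gj E hq hqB h4 e3
  have key : 2 * (aj - uj) *
        (-(A * (aj - uj)) - q * (aj * aj1 - uj * uj1) - q * (bj * bj1 - vj * vj1)
          + p * (am ^ 2 - um ^ 2) + p * (bm ^ 2 - vm ^ 2))
      + 2 * (bj - vj) *
        (-(B * (bj - vj)) + q * (aj * bj1 - uj * vj1) - q * (bj * aj1 - vj * uj1))
      = -(2 * (A * (aj - uj) ^ 2)) - 2 * (B * (bj - vj) ^ 2)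
        + 2 * (q * (-(aj - uj)) * (aj1 * (aj - uj)))
        + 2 * (q * (-(aj - uj)) * (uj * (aj1 - uj1)))
        + 2 * (q * (-(aj - uj)) * (bj1 * (bj - vj)))
        + 2 * (q * (-(aj - uj)) * (vj * (bj1 - vj1)))
        + 2 * (p * (aj - uj) * ((am + um) * (am - um)))
        + 2 * (p * (aj - uj) * ((bm + vm) * (bm - vm)))
        + 2 * (q * (bj - vj) * (bj1 * (aj - uj)))
        + 2 * (q * (bj - vj) * (uj * (bj1 - vj1)))
        + 2 * (q * (-(bj - vj)) * (aj1 * (bj - vj)))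
        + 2 * (q * (-(bj - vj)) * (vj * (aj1 - uj1))) := by ring
  rw [key]
  linarith [T1, T2, T3, T4, T5, T6, T7, T8, T9, T10,
    mul_nonneg hA0 (sq_nonneg (aj - uj)), mul_nonneg hB0 (sq_nonneg (bj - vj)),
    mul_nonneg hgm hE0, mul_nonneg hgj hE0, mul_nonneg hgj1 hE0]

set_option maxHeartbeats 2000000 in
/-- uniqueness of the Leray-Hopf solution to the dyadic model of
the generalized MHD system when `α ≥ 1/2` and `β ≥ 1/2`: any two Leray-Hopf
solutions with the same `l²` initial data and the same forcing
`f ∈ L²(0,T; H^{-α})` coincide on `[0,T]`. -/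
theorem uniqueness_LerayHopf_dyadic_gMHD
    (l α β T : ℝ) (hl : 1 < l) (hα : 1 / 2 ≤ α) (hβ : 1 / 2 ≤ β) (hT : 0 < T)
    (a0 b0 : ℕ → ℝ)
    (ha0 : Summable fun j => (a0 j) ^ 2) (hb0 : Summable fun j => (b0 j) ^ 2)
    (f : ℕ → ℝ → ℝ)
    (hfi : ∀ j, IntervalIntegrable (fun t => (f j t) ^ 2) volume 0 T)
    (hf : Summable fun j => lamPow l j (-(2 * α)) * ∫ t in (0:ℝ)..T, (f j t) ^ 2)
    (a b u v : ℕ → ℝ → ℝ)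
    (hab : IsLerayHopfGMHD l α β T f a b)
    (huv : IsLerayHopfGMHD l α β T f u v)
    (hinita : ∀ j, a j 0 = a0 j) (hinitb : ∀ j, b j 0 = b0 j)
    (hinitu : ∀ j, u j 0 = a0 j) (hinitv : ∀ j, v j 0 = b0 j) :
    ∀ j, ∀ t ∈ Icc 0 T, a j t = u j t ∧ b j t = v j t := by
  classical
  unfold IsLerayHopfGMHD IsWeakSolutionGMHD at hab huv
  obtain ⟨⟨haC, hbC, haS, hbS, haODE, hbODE⟩, ⟨M1, hM1⟩, hIa, hIb, -⟩ := hab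
  obtain ⟨⟨huC, hvC, huS, hvS, huODE, hvODE⟩, ⟨M2, hM2⟩, hIu, hIv, -⟩ := huv
  have hT0 : (0:ℝ) ≤ T := hT.le
  have hUD : UniqueDiffOn ℝ (Icc (0:ℝ) T) := uniqueDiffOn_Icc hT
  have haCt : ∀ j, ContinuousOn (a j) (Icc 0 T) := fun j => (haC j).continuousOn
  have hbCt : ∀ j, ContinuousOn (b j) (Icc 0 T) := fun j => (hbC j).continuousOn
  have huCt : ∀ j, ContinuousOn (u j) (Icc 0 T) := fun j => (huC j).continuousOn
  have hvCt : ∀ j, ContinuousOn (v j) (Icc 0 T) := fun j => (hvC j).continuousOn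
  have haD : ∀ j, ContinuousOn (derivWithin (a j) (Icc 0 T)) (Icc 0 T) :=
    fun j => (haC j).continuousOn_derivWithin hUD le_rfl
  have hbD : ∀ j, ContinuousOn (derivWithin (b j) (Icc 0 T)) (Icc 0 T) :=
    fun j => (hbC j).continuousOn_derivWithin hUD le_rfl
  have huD : ∀ j, ContinuousOn (derivWithin (u j) (Icc 0 T)) (Icc 0 T) :=
    fun j => (huC j).continuousOn_derivWithin hUD le_rfl
  have hvD : ∀ j, ContinuousOn (derivWithin (v j) (Icc 0 T)) (Icc 0 T) :=
    fun j => (hvC j).continuousOn_derivWithin hUD le_rfl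
  -- λ-facts
  have hqexpA : ∀ k, lamPow l k 1 ≤ lamPow l k (2 * α) :=
    fun k => lamPow_exp_mono hl k (by linarith)
  have hqexpB : ∀ k, lamPow l k 1 ≤ lamPow l k (2 * β) :=
    fun k => lamPow_exp_mono hl k (by linarith)
  have hqA' : ∀ k, lamPow l k 1 ≤ lamPow l (k + 1) (2 * α) :=
    fun k => (lamPow_base_mono hl (Nat.le_succ k) zero_le_one).trans (hqexpA (k + 1))
  have hqB' : ∀ k, lamPow l k 1 ≤ lamPow l (k + 1) (2 * β) :=
    fun k => (lamPow_base_mono hl (Nat.le_succ k) zero_le_one).trans (hqexpB (k + 1))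
  -- the weight function G
  set G : ℕ → ℝ → ℝ := fun j t =>
      lamPow l j (2 * α) * ((a j t) ^ 2 + (u j t) ^ 2)
        + lamPow l j (2 * β) * ((b j t) ^ 2 + (v j t) ^ 2) with hGdef
  have hGt0 : ∀ j t, 0 ≤ G j t := by
    intro j t
    have h1 := (lamPow_pos hl j (2 * α)).le
    have h2 := (lamPow_pos hl j (2 * β)).le
    simp only [hGdef]; positivity
  have hAu : ∀ k t', lamPow l k (2 * α) * ((a k t') ^ 2 + (u k t') ^ 2) ≤ G k t' := by
    intro k t'
    simp only [hGdef]
    nlinarith [mul_nonneg (lamPow_pos hl k (2 * β)).le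
      (add_nonneg (sq_nonneg (b k t')) (sq_nonneg (v k t')))]
  have hBv : ∀ k t', lamPow l k (2 * β) * ((b k t') ^ 2 + (v k t') ^ 2) ≤ G k t' := by
    intro k t'
    simp only [hGdef]
    nlinarith [mul_nonneg (lamPow_pos hl k (2 * α)).le
      (add_nonneg (sq_nonneg (a k t')) (sq_nonneg (u k t')))]
  -- the energy of the difference
  set Er : ℝ → ℝ := fun t => ∑' j, ((a j t - u j t) ^ 2 + (b j t - v j t) ^ 2) with hErdef
  have hwzS : ∀ t ∈ Icc (0:ℝ) T,
      Summable (fun j => (a j t - u j t) ^ 2 + (b j t - v j t) ^ 2) := by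
    intro t ht
    have hsum := (((haS t ht).add (huS t ht)).add ((hbS t ht).add (hvS t ht))).mul_left 2
    refine Summable.of_nonneg_of_le (fun j => by positivity) (fun j => ?_) hsum
    nlinarith [sq_nonneg (a j t + u j t), sq_nonneg (b j t + v j t)]
  have hEr0 : ∀ t, 0 ≤ Er t := fun t => tsum_nonneg (fun j => by positivity)
  have hw2le : ∀ j, ∀ t ∈ Icc (0:ℝ) T, (a j t - u j t) ^ 2 ≤ Er t := by
    intro j t ht
    have h := Summable.le_tsum (hwzS t ht) j (fun i _ => by positivity)
    simp only [hErdef]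
    nlinarith [sq_nonneg (b j t - v j t)]
  have hz2le : ∀ j, ∀ t ∈ Icc (0:ℝ) T, (b j t - v j t) ^ 2 ≤ Er t := by
    intro j t ht
    have h := Summable.le_tsum (hwzS t ht) j (fun i _ => by positivity)
    simp only [hErdef]
    nlinarith [sq_nonneg (a j t - u j t)]
  have hErB : ∀ t ∈ Icc (0:ℝ) T, Er t ≤ 2 * (M1 + M2) := by
    intro t ht
    have e1 := haS t ht; have e2 := hbS t ht; have e3 := huS t ht; have e4 := hvS t ht
    have hsum : Summable fun j =>
        2 * (a j t) ^ 2 + 2 * (u j t) ^ 2 + (2 * (b j t) ^ 2 + 2 * (v j t) ^ 2) :=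
      ((e1.mul_left 2).add (e3.mul_left 2)).add ((e2.mul_left 2).add (e4.mul_left 2))
    have h1 : Er t ≤ ∑' j,
        (2 * (a j t) ^ 2 + 2 * (u j t) ^ 2 + (2 * (b j t) ^ 2 + 2 * (v j t) ^ 2)) := by
      simp only [hErdef]
      refine Summable.tsum_le_tsum (fun j => ?_) (hwzS t ht) hsum
      nlinarith [sq_nonneg (a j t + u j t), sq_nonneg (b j t + v j t)]
    have h2 : ∑' j, (2 * (a j t) ^ 2 + 2 * (u j t) ^ 2 + (2 * (b j t) ^ 2 + 2 * (v j t) ^ 2))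
        = 2 * (∑' j, (a j t) ^ 2) + 2 * (∑' j, (u j t) ^ 2)
          + (2 * (∑' j, (b j t) ^ 2) + 2 * (∑' j, (v j t) ^ 2)) := by
      rw [Summable.tsum_add ((e1.mul_left 2).add (e3.mul_left 2)) ((e2.mul_left 2).add (e4.mul_left 2)),
        Summable.tsum_add (e1.mul_left 2) (e3.mul_left 2), Summable.tsum_add (e2.mul_left 2) (e4.mul_left 2),
        tsum_mul_left, tsum_mul_left, tsum_mul_left, tsum_mul_left]
    rw [h2] at h1
    have m1 := hM1 t ht
    have m2 := hM2 t ht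
    linarith
  -- the per-mode quantity `D_j = (w_j² + z_j²)'`
  set DD : ℕ → ℝ → ℝ := fun j t =>
      2 * (a j t - u j t) * (derivWithin (a j) (Icc 0 T) t - derivWithin (u j) (Icc 0 T) t)
        + 2 * (b j t - v j t) * (derivWithin (b j) (Icc 0 T) t - derivWithin (v j) (Icc 0 T) t)
    with hDDdef
  -- the key per-mode differential inequality
  have hmode : ∀ j, ∀ t ∈ Icc (0:ℝ) T,
      DD j t ≤ 32 * (dprev G j t + G j t + G (j + 1) t) * Er t := by
    intro j t ht
    have hODEa := haODE j t ht
    have hODEu := huODE j t ht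
    have hODEb := hbODE j t ht
    have hODEv := hvODE j t ht
    have hDDval : DD j t =
        2 * (a j t - u j t) *
          (-(lamPow l j (2 * α) * (a j t - u j t))
            - lamPow l j 1 * (a j t * a (j + 1) t - u j t * u (j + 1) t)
            - lamPow l j 1 * (b j t * b (j + 1) t - v j t * v (j + 1) t)
            + (dprev (fun i s => lamPow l i 1 * (a i s) ^ 2) j t
                - dprev (fun i s => lamPow l i 1 * (u i s) ^ 2) j t)
            + (dprev (fun i s => lamPow l i 1 * (b i s) ^ 2) j t
                - dprev (fun i s => lamPow l i 1 * (v i s) ^ 2) j t))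
        + 2 * (b j t - v j t) *
          (-(lamPow l j (2 * β) * (b j t - v j t))
            + lamPow l j 1 * (a j t * b (j + 1) t - u j t * v (j + 1) t)
            - lamPow l j 1 * (b j t * a (j + 1) t - v j t * u (j + 1) t)) := by
      simp only [hDDdef]
      linear_combination (2 * (a j t - u j t)) * hODEa - (2 * (a j t - u j t)) * hODEu
        + (2 * (b j t - v j t)) * hODEb - (2 * (b j t - v j t)) * hODEv
    rw [hDDval]
    have hq := (lamPow_pos hl j 1).le
    have he1 := hw2le j t ht
    have he2 := hz2le j t ht
    have he3 := hw2le (j + 1) t ht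
    have he4 := hz2le (j + 1) t ht
    have hh1 : lamPow l j 1 * (a (j + 1) t) ^ 2 ≤ G (j + 1) t := by
      nlinarith [hAu (j + 1) t, mul_le_mul_of_nonneg_right (hqA' j) (sq_nonneg (a (j + 1) t)),
        mul_nonneg (lamPow_pos hl (j + 1) (2 * α)).le (sq_nonneg (u (j + 1) t))]
    have hh2 : lamPow l j 1 * (b (j + 1) t) ^ 2 ≤ G (j + 1) t := by
      nlinarith [hBv (j + 1) t, mul_le_mul_of_nonneg_right (hqB' j) (sq_nonneg (b (j + 1) t)),
        mul_nonneg (lamPow_pos hl (j + 1) (2 * β)).le (sq_nonneg (v (j + 1) t))]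
    have hh3 : lamPow l j 1 * (u j t) ^ 2 ≤ G j t := by
      nlinarith [hAu j t, mul_le_mul_of_nonneg_right (hqexpA j) (sq_nonneg (u j t)),
        mul_nonneg (lamPow_pos hl j (2 * α)).le (sq_nonneg (a j t))]
    have hh4 : lamPow l j 1 * (v j t) ^ 2 ≤ G j t := by
      nlinarith [hBv j t, mul_le_mul_of_nonneg_right (hqexpB j) (sq_nonneg (v j t)),
        mul_nonneg (lamPow_pos hl j (2 * β)).le (sq_nonneg (b j t))]
    rcases j with _ | J
    · -- j = 0 : no lower-neighbour terms
      simp only [dprev]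
      have HB := gmhd_modeBound (lamPow l 0 (2 * α)) (lamPow l 0 (2 * β)) 0 (lamPow l 0 1)
        0 (G 0 t) (G 1 t) (Er t)
        (a 0 t) (u 0 t) (b 0 t) (v 0 t) (a 1 t) (u 1 t) (b 1 t) (v 1 t) 0 0 0 0
        le_rfl hq (lamPow_pos hl 0 (2 * α)).le (hqexpA 0) (hqexpB 0)
        hh1 hh2 hh3 hh4 (by norm_num) (by norm_num)
        he1 he2 he3 he4 (by simpa using hEr0 t) (by simpa using hEr0 t)
      linarith [HB]
    · -- j = J+1
      simp only [dprev]
      have hp := (lamPow_pos hl J 1).le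
      have hh5 : lamPow l J 1 * (a J t + u J t) ^ 2 ≤ 2 * G J t := by
        nlinarith [hAu J t, mul_le_mul_of_nonneg_right (hqexpA J) (sq_nonneg (a J t + u J t)),
          mul_nonneg (lamPow_pos hl J (2 * α)).le (sq_nonneg (a J t - u J t))]
      have hh6 : lamPow l J 1 * (b J t + v J t) ^ 2 ≤ 2 * G J t := by
        nlinarith [hBv J t, mul_le_mul_of_nonneg_right (hqexpB J) (sq_nonneg (b J t + v J t)),
          mul_nonneg (lamPow_pos hl J (2 * β)).le (sq_nonneg (b J t - v J t))]
      have HB := gmhd_modeBound (lamPow l (J + 1) (2 * α)) (lamPow l (J + 1) (2 * β))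
        (lamPow l J 1) (lamPow l (J + 1) 1)
        (G J t) (G (J + 1) t) (G (J + 2) t) (Er t)
        (a (J + 1) t) (u (J + 1) t) (b (J + 1) t) (v (J + 1) t)
        (a (J + 2) t) (u (J + 2) t) (b (J + 2) t) (v (J + 2) t)
        (a J t) (u J t) (b J t) (v J t)
        hp hq (hqA' J) (hqexpA (J + 1)) (hqexpB (J + 1))
        hh1 hh2 hh3 hh4 hh5 hh6
        he1 he2 he3 he4 (hw2le J t ht) (hz2le J t ht)
      linarith [HB]
  -- partial sums and their derivatives
  set Φ : ℕ → ℝ → ℝ := fun N t =>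
      ∑ j ∈ Finset.range N, ((a j t - u j t) ^ 2 + (b j t - v j t) ^ 2) with hΦdef
  set DS : ℕ → ℝ → ℝ := fun N t => ∑ j ∈ Finset.range N, DD j t with hDSdef
  have hder : ∀ N, ∀ t ∈ Icc (0:ℝ) T, HasDerivWithinAt (Φ N) (DS N t) (Icc 0 T) t := by
    intro N t ht
    rw [hΦdef, hDSdef]
    refine HasDerivWithinAt.fun_sum (fun j _ => ?_)
    have hwd : HasDerivWithinAt (fun s => a j s - u j s)
        (derivWithin (a j) (Icc 0 T) t - derivWithin (u j) (Icc 0 T) t) (Icc 0 T) t :=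
      (((haC j).differentiableOn one_ne_zero) t ht).hasDerivWithinAt.sub
        ((((huC j).differentiableOn one_ne_zero) t ht).hasDerivWithinAt)
    have hzd : HasDerivWithinAt (fun s => b j s - v j s)
        (derivWithin (b j) (Icc 0 T) t - derivWithin (v j) (Icc 0 T) t) (Icc 0 T) t :=
      (((hbC j).differentiableOn one_ne_zero) t ht).hasDerivWithinAt.sub
        ((((hvC j).differentiableOn one_ne_zero) t ht).hasDerivWithinAt)
    have h1 : HasDerivWithinAt (fun s => (a j s - u j s) ^ 2)
        (2 * (a j t - u j t) * (derivWithin (a j) (Icc 0 T) t - derivWithin (u j) (Icc 0 T) t))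
        (Icc 0 T) t := by
      have h := hwd.fun_pow 2
      norm_num at h
      convert h using 1 <;> try ring
    have h2 : HasDerivWithinAt (fun s => (b j s - v j s) ^ 2)
        (2 * (b j t - v j t) * (derivWithin (b j) (Icc 0 T) t - derivWithin (v j) (Icc 0 T) t))
        (Icc 0 T) t := by
      have h := hzd.fun_pow 2
      norm_num at h
      convert h using 1 <;> try ring
    simp only [hDDdef]
    exact h1.add h2
  have hΦcont : ∀ N, ContinuousOn (Φ N) (Icc 0 T) :=
    fun N t ht => (hder N t ht).continuousWithinAt
  have hDDcont : ∀ j, ContinuousOn (DD j) (Icc 0 T) := by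
    intro j
    simp only [hDDdef]
    exact ((continuousOn_const.mul ((haCt j).sub (huCt j))).mul ((haD j).sub (huD j))).add
      ((continuousOn_const.mul ((hbCt j).sub (hvCt j))).mul ((hbD j).sub (hvD j)))
  have hDScont : ∀ N, ContinuousOn (DS N) (Icc 0 T) := by
    intro N
    simp only [hDSdef]
    exact continuousOn_finset_sum _ (fun j _ => hDDcont j)
  have hΦ0 : ∀ N, Φ N 0 = 0 := by
    intro N
    simp only [hΦdef]
    refine Finset.sum_eq_zero (fun j _ => ?_)
    rw [hinita j, hinitu j, hinitb j, hinitv j]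
    ring
  have hFTC : ∀ N, ∀ t ∈ Icc (0:ℝ) T, Φ N t = ∫ τ in (0:ℝ)..t, DS N τ := by
    intro N t ht
    obtain ⟨ht0, htT⟩ := ht
    have hsub : Icc (0:ℝ) t ⊆ Icc 0 T := Icc_subset_Icc le_rfl htT
    have h := intervalIntegral.integral_eq_sub_of_hasDeriv_right_of_le ht0
      ((hΦcont N).mono hsub)
      (fun x hx => by
        have hxI : x ∈ Icc (0:ℝ) T := ⟨hx.1.le, (hx.2.le.trans htT)⟩
        exact ((hder N x hxI).hasDerivAt
          (Icc_mem_nhds hx.1 (lt_of_lt_of_le hx.2 htT))).hasDerivWithinAt)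
      (((hDScont N).mono hsub).intervalIntegrable_of_Icc ht0)
    rw [h, hΦ0 N, sub_zero]
  -- pointwise bound on DS
  have hDSle : ∀ N, ∀ t ∈ Icc (0:ℝ) T,
      DS N t ≤ 96 * ((∑ j ∈ Finset.range (N + 1), G j t) * Er t) := by
    intro N t ht
    have h1 : DS N t ≤ ∑ j ∈ Finset.range N,
        32 * (dprev G j t + G j t + G (j + 1) t) * Er t := by
      simp only [hDSdef]
      exact Finset.sum_le_sum (fun j _ => hmode j t ht)
    have h2 : ∑ j ∈ Finset.range N, 32 * (dprev G j t + G j t + G (j + 1) t) * Er t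
        = 32 * ((∑ j ∈ Finset.range N, dprev G j t) + (∑ j ∈ Finset.range N, G j t)
            + (∑ j ∈ Finset.range N, G (j + 1) t)) * Er t := by
      rw [← Finset.sum_mul, ← Finset.mul_sum, Finset.sum_add_distrib, Finset.sum_add_distrib]
    have h3 : ∑ j ∈ Finset.range N, dprev G j t ≤ ∑ j ∈ Finset.range (N + 1), G j t := by
      cases N with
      | zero => simpa using Finset.sum_nonneg (fun i (_ : i ∈ Finset.range 1) => hGt0 i t)
      | succ m =>
        rw [Finset.sum_range_succ']
        simp only [dprev]
        rw [add_zero]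
        exact Finset.sum_le_sum_of_subset_of_nonneg
          (Finset.range_subset_range.2 (by omega)) (fun i _ _ => hGt0 i t)
    have h4 : ∑ j ∈ Finset.range N, G j t ≤ ∑ j ∈ Finset.range (N + 1), G j t :=
      Finset.sum_le_sum_of_subset_of_nonneg (Finset.range_subset_range.2 (by omega))
        (fun i _ _ => hGt0 i t)
    have h5 : ∑ j ∈ Finset.range N, G (j + 1) t ≤ ∑ j ∈ Finset.range (N + 1), G j t := by
      rw [Finset.sum_range_succ' (fun j => G j t) N]
      exact le_add_of_nonneg_right (hGt0 0 t)
    rw [h2] at h1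
    have hE := hEr0 t
    nlinarith [h1, Finset.sum_nonneg (fun i (_ : i ∈ Finset.range (N + 1)) => hGt0 i t)]
  -- ENNReal versions
  set Fe : ℝ → ℝ≥0∞ := fun t =>
      ∑' j, ENNReal.ofReal ((a j t - u j t) ^ 2 + (b j t - v j t) ^ 2) with hFedef
  set Ge : ℝ → ℝ≥0∞ := fun t => ∑' j, ENNReal.ofReal (G j t) with hGedef
  have hFe_eq : ∀ t ∈ Icc (0:ℝ) T, Fe t = ENNReal.ofReal (Er t) := by
    intro t ht
    simp only [hFedef, hErdef]
    exact (ENNReal.ofReal_tsum_of_nonneg (fun j => by positivity) (hwzS t ht)).symm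
  have hFe_leB : ∀ t ∈ Icc (0:ℝ) T, Fe t ≤ ENNReal.ofReal (2 * (M1 + M2)) := by
    intro t ht
    rw [hFe_eq t ht]
    exact ENNReal.ofReal_le_ofReal (hErB t ht)
  have hΦofReal : ∀ N t, ENNReal.ofReal (Φ N t)
      = ∑ j ∈ Finset.range N, ENNReal.ofReal ((a j t - u j t) ^ 2 + (b j t - v j t) ^ 2) := by
    intro N t
    simp only [hΦdef]
    exact ENNReal.ofReal_sum_of_nonneg (fun j _ => by positivity)
  have hFe_sup : ∀ t, Fe t = ⨆ N, ENNReal.ofReal (Φ N t) := by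
    intro t
    simp only [hFedef]
    rw [ENNReal.tsum_eq_iSup_nat]
    exact iSup_congr fun N => (hΦofReal N t).symm
  -- the key integral inequality
  have hKey : ∀ t ∈ Icc (0:ℝ) T, ∀ N,
      ENNReal.ofReal (Φ N t) ≤ 96 * ∫⁻ τ in Ioc (0:ℝ) t, Ge τ * Fe τ := by
    intro t ht N
    obtain ⟨ht0, htT⟩ := ht
    have hsub : Icc (0:ℝ) t ⊆ Icc 0 T := Icc_subset_Icc le_rfl htT
    have hψcont : ContinuousOn (fun τ => max (DS N τ) 0) (Icc 0 t) :=
      (continuous_id.max continuous_const).comp_continuousOn ((hDScont N).mono hsub)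
    have hstep1 : Φ N t ≤ ∫ τ in (0:ℝ)..t, max (DS N τ) 0 := by
      rw [hFTC N t ⟨ht0, htT⟩]
      exact intervalIntegral.integral_mono_on ht0
        (((hDScont N).mono hsub).intervalIntegrable_of_Icc ht0)
        (hψcont.intervalIntegrable_of_Icc ht0)
        (fun x _ => le_max_left _ _)
    have hψint : IntegrableOn (fun τ => max (DS N τ) 0) (Ioc 0 t) volume :=
      (hψcont.integrableOn_Icc).mono_set Ioc_subset_Icc_self
    have hstep3 : ENNReal.ofReal (∫ τ in Ioc (0:ℝ) t, max (DS N τ) 0)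
        = ∫⁻ τ in Ioc (0:ℝ) t, ENNReal.ofReal (max (DS N τ) 0) :=
      ofReal_integral_eq_lintegral_ofReal hψint
        (Filter.Eventually.of_forall (fun τ => le_max_right _ _))
    have hstep4 : (∫⁻ τ in Ioc (0:ℝ) t, ENNReal.ofReal (max (DS N τ) 0))
        ≤ ∫⁻ τ in Ioc (0:ℝ) t, 96 * (Ge τ * Fe τ) := by
      refine lintegral_mono_ae ((ae_restrict_iff' measurableSet_Ioc).2
        (Filter.Eventually.of_forall (fun τ hτ => ?_)))
      have hτI : τ ∈ Icc (0:ℝ) T := ⟨hτ.1.le, hτ.2.trans htT⟩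
      have hση : 0 ≤ (∑ j ∈ Finset.range (N + 1), G j τ) :=
        Finset.sum_nonneg (fun i _ => hGt0 i τ)
      have hb1 : max (DS N τ) 0 ≤ 96 * ((∑ j ∈ Finset.range (N + 1), G j τ) * Er τ) :=
        max_le (hDSle N τ hτI) (by nlinarith [hEr0 τ, hση])
      calc ENNReal.ofReal (max (DS N τ) 0)
          ≤ ENNReal.ofReal (96 * ((∑ j ∈ Finset.range (N + 1), G j τ) * Er τ)) :=
            ENNReal.ofReal_le_ofReal hb1
        _ = 96 * (ENNReal.ofReal (∑ j ∈ Finset.range (N + 1), G j τ)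
              * ENNReal.ofReal (Er τ)) := by
            rw [ENNReal.ofReal_mul (by norm_num), ENNReal.ofReal_mul hση,
              ENNReal.ofReal_ofNat]
        _ ≤ 96 * (Ge τ * Fe τ) := by
            refine mul_le_mul_right (mul_le_mul' ?_ ?_) _
            · rw [ENNReal.ofReal_sum_of_nonneg (fun i _ => hGt0 i τ), hGedef]
              exact ENNReal.sum_le_tsum _
            · rw [hFe_eq τ hτI]
      done
    have hstep5 : (∫⁻ τ in Ioc (0:ℝ) t, 96 * (Ge τ * Fe τ))
        = 96 * ∫⁻ τ in Ioc (0:ℝ) t, Ge τ * Fe τ :=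
      lintegral_const_mul' _ _ (by norm_num)
    calc ENNReal.ofReal (Φ N t)
        ≤ ENNReal.ofReal (∫ τ in (0:ℝ)..t, max (DS N τ) 0) := ENNReal.ofReal_le_ofReal hstep1
      _ = ENNReal.ofReal (∫ τ in Ioc (0:ℝ) t, max (DS N τ) 0) := by
          rw [intervalIntegral.integral_of_le ht0]
      _ = ∫⁻ τ in Ioc (0:ℝ) t, ENNReal.ofReal (max (DS N τ) 0) := hstep3
      _ ≤ ∫⁻ τ in Ioc (0:ℝ) t, 96 * (Ge τ * Fe τ) := hstep4
      _ = 96 * ∫⁻ τ in Ioc (0:ℝ) t, Ge τ * Fe τ := hstep5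
  have hFkey : ∀ t ∈ Icc (0:ℝ) T, Fe t ≤ 96 * ∫⁻ τ in Ioc (0:ℝ) t, Ge τ * Fe τ := by
    intro t ht
    rw [hFe_sup t]
    exact iSup_le (fun N => hKey t ht N)
  -- finiteness of the Grönwall weight
  have hGcont : ∀ j, ContinuousOn (G j) (Icc 0 T) := by
    intro j
    simp only [hGdef]
    exact (continuousOn_const.mul (((haCt j).pow 2).add ((huCt j).pow 2))).add
      (continuousOn_const.mul (((hbCt j).pow 2).add ((hvCt j).pow 2)))
  have hGint : ∀ j, IntervalIntegrable (G j) volume 0 T :=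
    fun j => (hGcont j).intervalIntegrable_of_Icc hT0
  have hp1 : ∀ j, IntervalIntegrable (fun τ => lamPow l j (2 * α) * (a j τ) ^ 2) volume 0 T :=
    fun j => (continuousOn_const.mul ((haCt j).pow 2)).intervalIntegrable_of_Icc hT0
  have hp2 : ∀ j, IntervalIntegrable (fun τ => lamPow l j (2 * α) * (u j τ) ^ 2) volume 0 T :=
    fun j => (continuousOn_const.mul ((huCt j).pow 2)).intervalIntegrable_of_Icc hT0
  have hp3 : ∀ j, IntervalIntegrable (fun τ => lamPow l j (2 * β) * (b j τ) ^ 2) volume 0 T :=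
    fun j => (continuousOn_const.mul ((hbCt j).pow 2)).intervalIntegrable_of_Icc hT0
  have hp4 : ∀ j, IntervalIntegrable (fun τ => lamPow l j (2 * β) * (v j τ) ^ 2) volume 0 T :=
    fun j => (continuousOn_const.mul ((hvCt j).pow 2)).intervalIntegrable_of_Icc hT0
  have h4 : ∀ j, (∫ τ in (0:ℝ)..T, G j τ)
      = ((∫ τ in (0:ℝ)..T, lamPow l j (2 * α) * (a j τ) ^ 2)
          + (∫ τ in (0:ℝ)..T, lamPow l j (2 * α) * (u j τ) ^ 2))
        + ((∫ τ in (0:ℝ)..T, lamPow l j (2 * β) * (b j τ) ^ 2)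
          + (∫ τ in (0:ℝ)..T, lamPow l j (2 * β) * (v j τ) ^ 2)) := by
    intro j
    have hGeq : EqOn (G j) (fun τ =>
        (lamPow l j (2 * α) * (a j τ) ^ 2 + lamPow l j (2 * α) * (u j τ) ^ 2)
          + (lamPow l j (2 * β) * (b j τ) ^ 2 + lamPow l j (2 * β) * (v j τ) ^ 2))
        (uIcc 0 T) := by
      intro τ _
      simp only [hGdef]
      ring
    rw [intervalIntegral.integral_congr hGeq,
      intervalIntegral.integral_add ((hp1 j).add (hp2 j)) ((hp3 j).add (hp4 j)),
      intervalIntegral.integral_add (hp1 j) (hp2 j),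
      intervalIntegral.integral_add (hp3 j) (hp4 j)]
  have hGsum : Summable (fun j => ∫ τ in (0:ℝ)..T, G j τ) :=
    Summable.congr ((hIa.add hIu).add (hIb.add hIv)) (fun j => (h4 j).symm)
  have hGemeas : ∀ j, AEMeasurable (fun τ => ENNReal.ofReal (G j τ))
      (volume.restrict (Ioc (0:ℝ) T)) := by
    intro j
    exact ENNReal.measurable_ofReal.comp_aemeasurable
      (((hGcont j).mono Ioc_subset_Icc_self).aemeasurable measurableSet_Ioc)
  have hGefin : (∫⁻ τ in Ioc (0:ℝ) T, Ge τ) ≠ ⊤ := by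
    have e1 : (∫⁻ τ in Ioc (0:ℝ) T, Ge τ)
        = ∑' j, ∫⁻ τ in Ioc (0:ℝ) T, ENNReal.ofReal (G j τ) := by
      simp only [hGedef]
      exact lintegral_tsum hGemeas
    have e2 : ∀ j, (∫⁻ τ in Ioc (0:ℝ) T, ENNReal.ofReal (G j τ))
        = ENNReal.ofReal (∫ τ in (0:ℝ)..T, G j τ) := by
      intro j
      rw [intervalIntegral.integral_of_le hT0]
      exact (ofReal_integral_eq_lintegral_ofReal (hGint j).1
        (Filter.Eventually.of_forall (fun τ => hGt0 j τ))).symm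
    rw [e1, tsum_congr e2,
      ← ENNReal.ofReal_tsum_of_nonneg
        (fun j => intervalIntegral.integral_nonneg hT0 (fun τ _ => hGt0 j τ)) hGsum]
    exact ENNReal.ofReal_ne_top
  -- Grönwall via the supremum of the vanishing set
  set S : Set ℝ := {t | t ∈ Icc (0:ℝ) T ∧ ∀ s ∈ Icc (0:ℝ) t, Fe s = 0} with hSdef
  have hFe0 : Fe 0 = 0 := by
    simp only [hFedef]
    have hz : (fun j => ENNReal.ofReal ((a j 0 - u j 0) ^ 2 + (b j 0 - v j 0) ^ 2))
        = fun _ => 0 := by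
      funext j
      rw [hinita j, hinitu j, hinitb j, hinitv j]
      simp
    rw [hz, tsum_zero]
  have hS0 : (0:ℝ) ∈ S := by
    refine ⟨left_mem_Icc.2 hT0, fun s hs => ?_⟩
    have : s = 0 := le_antisymm hs.2 hs.1
    rw [this]; exact hFe0
  have hSne : S.Nonempty := ⟨0, hS0⟩
  have hSbdd : BddAbove S := ⟨T, fun x hx => hx.1.2⟩
  set c := sSup S with hcdef
  have hc0 : 0 ≤ c := le_csSup hSbdd hS0
  have hcT : c ≤ T := csSup_le hSne (fun x hx => hx.1.2)
  have hcIcc : c ∈ Icc (0:ℝ) T := ⟨hc0, hcT⟩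
  have hFe_lt_c : ∀ s, 0 ≤ s → s < c → Fe s = 0 := by
    intro s hs0 hsc
    obtain ⟨x, hxS, hsx⟩ := exists_lt_of_lt_csSup hSne hsc
    exact hxS.2 s ⟨hs0, hsx.le⟩
  have hLzero : (∫⁻ τ in Ioc (0:ℝ) c, Ge τ * Fe τ) = 0 := by
    have hbad : {τ : ℝ | ¬(τ ∈ Ioc (0:ℝ) c → Ge τ * Fe τ = 0)} ⊆ {c} := by
      intro τ hτ
      simp only [mem_setOf_eq, Classical.not_imp] at hτ
      obtain ⟨hmem, hval⟩ := hτ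
      by_contra hne
      simp only [mem_singleton_iff] at hne
      exact hval (by rw [hFe_lt_c τ hmem.1.le (lt_of_le_of_ne hmem.2 hne), mul_zero])
    have hae : ∀ᵐ τ ∂(volume : Measure ℝ), τ ∈ Ioc (0:ℝ) c → Ge τ * Fe τ = 0 := by
      rw [ae_iff]
      exact measure_mono_null hbad Real.volume_singleton
    calc (∫⁻ τ in Ioc (0:ℝ) c, Ge τ * Fe τ)
        = ∫⁻ _ in Ioc (0:ℝ) c, 0 := lintegral_congr_ae ((ae_restrict_iff' measurableSet_Ioc).2 hae)
      _ = 0 := lintegral_zero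
  have hFec : Fe c = 0 := by
    have h := hFkey c hcIcc
    rw [hLzero, mul_zero] at h
    exact le_antisymm h (zero_le)
  have hcS : c ∈ S := by
    refine ⟨hcIcc, fun s hs => ?_⟩
    rcases lt_or_eq_of_le hs.2 with h | h
    · exact hFe_lt_c s hs.1 h
    · rw [h]; exact hFec
  have hceqT : c = T := by
    by_contra hne
    have hcltT : c < T := lt_of_le_of_ne hcT hne
    set ε : ℝ≥0∞ := 2⁻¹ / 96 with hεdef
    have hε0 : 0 < ε := ENNReal.div_pos (by norm_num) (by norm_num)
    have hμtend : Filter.Tendsto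
        (fun n : ℕ => (volume.restrict (Ioc (0:ℝ) T)) (Ioc c (c + 1 / (n + 1))))
        Filter.atTop (nhds 0) := by
      have hub : ∀ n : ℕ, (volume.restrict (Ioc (0:ℝ) T)) (Ioc c (c + 1 / (n + 1)))
          ≤ ENNReal.ofReal (1 / (n + 1)) := by
        intro n
        refine (Measure.restrict_apply_le _ _).trans ?_
        rw [Real.volume_Ioc]
        exact le_of_eq (by congr 1; ring)
      have h2 : Filter.Tendsto (fun n : ℕ => ENNReal.ofReal (1 / ((n:ℝ) + 1)))
          Filter.atTop (nhds 0) := by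
        simpa using ENNReal.tendsto_ofReal tendsto_one_div_add_atTop_nhds_zero_nat
      exact tendsto_of_tendsto_of_tendsto_of_le_of_le tendsto_const_nhds h2
        (fun n => zero_le) hub
    have htend : Filter.Tendsto
        (fun n : ℕ => ∫⁻ τ in Ioc c (c + 1 / (n + 1)), Ge τ ∂(volume.restrict (Ioc (0:ℝ) T)))
        Filter.atTop (nhds 0) :=
      tendsto_setLIntegral_zero hGefin hμtend
    obtain ⟨n, hn⟩ : ∃ n : ℕ,
        (∫⁻ τ in Ioc c (c + 1 / (n + 1)), Ge τ ∂(volume.restrict (Ioc (0:ℝ) T))) < ε :=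
      (htend.eventually (Iio_mem_nhds hε0)).exists
    have hδ0 : (0:ℝ) < 1 / ((n:ℝ) + 1) := by positivity
    set d := min (c + 1 / ((n:ℝ) + 1)) T with hddef
    have hcd : c < d := lt_min (by linarith) hcltT
    have hdT : d ≤ T := min_le_right _ _
    have hd0 : 0 ≤ d := hc0.trans hcd.le
    have hsmall : (∫⁻ τ in Ioc c d, Ge τ) < ε := by
      have hIsub : Ioc c d ⊆ Ioc (0:ℝ) T := Ioc_subset_Ioc hc0 hdT
      have heq : (∫⁻ τ in Ioc c d, Ge τ)
          = ∫⁻ τ in Ioc c d, Ge τ ∂(volume.restrict (Ioc (0:ℝ) T)) := by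
        rw [Measure.restrict_restrict measurableSet_Ioc, inter_eq_self_of_subset_left hIsub]
      rw [heq]
      refine lt_of_le_of_lt ?_ hn
      exact lintegral_mono_set (Ioc_subset_Ioc le_rfl (min_le_left _ _))
    set sstar : ℝ≥0∞ := ⨆ t ∈ Ioc c d, Fe t with hsstardef
    have hsstar_le : sstar ≤ ENNReal.ofReal (2 * (M1 + M2)) :=
      iSup₂_le (fun t ht' => hFe_leB t ⟨hc0.trans ht'.1.le, ht'.2.trans hdT⟩)
    have hsstar_ne_top : sstar ≠ ⊤ := (lt_of_le_of_lt hsstar_le ENNReal.ofReal_lt_top).ne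
    have hbound : ∀ t ∈ Ioc c d, Fe t ≤ 2⁻¹ * sstar := by
      intro t htc
      have htI : t ∈ Icc (0:ℝ) T := ⟨hc0.trans htc.1.le, htc.2.trans hdT⟩
      have h1 := hFkey t htI
      have hsplit : (∫⁻ τ in Ioc (0:ℝ) t, Ge τ * Fe τ)
          = (∫⁻ τ in Ioc (0:ℝ) c, Ge τ * Fe τ) + ∫⁻ τ in Ioc c t, Ge τ * Fe τ := by
        rw [← lintegral_union measurableSet_Ioc (Ioc_disjoint_Ioc_of_le le_rfl),
          Ioc_union_Ioc_eq_Ioc hc0 htc.1.le]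
      have h2 : (∫⁻ τ in Ioc c t, Ge τ * Fe τ) ≤ sstar * ∫⁻ τ in Ioc c t, Ge τ := by
        have hpt : ∀ τ ∈ Ioc c t, Ge τ * Fe τ ≤ Ge τ * sstar := by
          intro τ hτ
          exact mul_le_mul_right
            (le_iSup₂ (f := fun (t : ℝ) (_ : t ∈ Ioc c d) => Fe t) τ
              ⟨hτ.1, hτ.2.trans htc.2⟩) _
        calc (∫⁻ τ in Ioc c t, Ge τ * Fe τ)
            ≤ ∫⁻ τ in Ioc c t, Ge τ * sstar :=
              lintegral_mono_ae ((ae_restrict_iff' measurableSet_Ioc).2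
                (Filter.Eventually.of_forall hpt))
          _ = (∫⁻ τ in Ioc c t, Ge τ) * sstar := lintegral_mul_const' _ _ hsstar_ne_top
          _ = sstar * ∫⁻ τ in Ioc c t, Ge τ := mul_comm _ _
      have h3 : (∫⁻ τ in Ioc c t, Ge τ) ≤ ∫⁻ τ in Ioc c d, Ge τ :=
        lintegral_mono_set (Ioc_subset_Ioc le_rfl htc.2)
      have h96ε : (96 : ℝ≥0∞) * ε = 2⁻¹ := by
        rw [hεdef]
        exact ENNReal.mul_div_cancel' (by norm_num) (by norm_num)
      calc Fe t ≤ 96 * ∫⁻ τ in Ioc (0:ℝ) t, Ge τ * Fe τ := h1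
        _ = 96 * ((∫⁻ τ in Ioc (0:ℝ) c, Ge τ * Fe τ) + ∫⁻ τ in Ioc c t, Ge τ * Fe τ) := by
            rw [hsplit]
        _ = 96 * ∫⁻ τ in Ioc c t, Ge τ * Fe τ := by rw [hLzero, zero_add]
        _ ≤ 96 * (sstar * ∫⁻ τ in Ioc c d, Ge τ) :=
            mul_le_mul_right (h2.trans (mul_le_mul_right h3 _)) _
        _ ≤ 96 * (sstar * ε) := mul_le_mul_right (mul_le_mul_right hsmall.le _) _
        _ = (96 * ε) * sstar := by ring
        _ = 2⁻¹ * sstar := by rw [h96ε]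
    have hsstar_half : sstar ≤ 2⁻¹ * sstar := iSup₂_le hbound
    have hsz : sstar = 0 := by
      by_contra hne'
      have hlt : 2⁻¹ * sstar < sstar := by
        have := ENNReal.half_lt_self hne' hsstar_ne_top
        rwa [ENNReal.div_eq_inv_mul] at this
      exact absurd hsstar_half (not_le.2 hlt)
    have hdS : d ∈ S := by
      refine ⟨⟨hd0, hdT⟩, fun s hs => ?_⟩
      rcases le_or_gt s c with h | h
      · exact hcS.2 s ⟨hs.1, h⟩
      · have hle : Fe s ≤ sstar :=
          le_iSup₂ (f := fun (t : ℝ) (_ : t ∈ Ioc c d) => Fe t) s ⟨h, hs.2⟩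
        rw [hsz] at hle
        exact le_antisymm hle (zero_le)
    exact absurd (le_csSup hSbdd hdS) (not_le.2 hcd)
  have hFeT : ∀ t ∈ Icc (0:ℝ) T, Fe t = 0 := by
    intro t ht
    exact (hceqT ▸ hcS).2 t ht
  -- conclusion
  intro j t ht
  have h0 : ENNReal.ofReal ((a j t - u j t) ^ 2 + (b j t - v j t) ^ 2) = 0 := by
    refine le_antisymm ?_ (zero_le)
    rw [← hFeT t ht, hFedef]
    exact ENNReal.le_tsum j
  have hle := ENNReal.ofReal_eq_zero.1 h0
  have hw0 : (a j t - u j t) ^ 2 = 0 := by nlinarith [sq_nonneg (a j t - u j t), sq_nonneg (b j t - v j t)]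
  have hz0 : (b j t - v j t) ^ 2 = 0 := by nlinarith [sq_nonneg (a j t - u j t), sq_nonneg (b j t - v j t)]
  constructor
  · have := pow_eq_zero_iff (n := 2) (by norm_num) |>.1 hw0
    linarith [sub_eq_zero.1 this]
  · have := pow_eq_zero_iff (n := 2) (by norm_num) |>.1 hz0
    linarith [sub_eq_zero.1 this]
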